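/- If two skew diagrams λ/μ and α/β have equal skew Schur functions s_{λ/μ} = s_{α/β}, then they have the same multiset of column heights; in particular the partition obtained by sorting the column heights of λ/μ in decreasing order equals the one for α/β. -/

import Mathlib

open YoungDiagram
open scoped Classical

namespace LRSkew

/-- The cells of the skew diagram `lam/mu`. -/
def skewCells (lam mu : YoungDiagram) : Finset (ℕ × ℕ) := lam.cells \ mu.cells

/-- A semistandard filling of the skew shape `lam/mu`: entries are positive exactly on the
cells of the shape, rows are weakly increasing and columns are strictly increasing. -/
def IsSSYT (lam mu : YoungDiagram) (T : ℕ × ℕ → ℕ) : Prop :=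
  (∀ p, p ∈ skewCells lam mu ↔ T p ≠ 0) ∧
  (∀ i j1 j2, (i, j1) ∈ skewCells lam mu → (i, j2) ∈ skewCells lam mu → j1 ≤ j2 →
    T (i, j1) ≤ T (i, j2)) ∧
  (∀ i1 i2 j, (i1, j) ∈ skewCells lam mu → (i2, j) ∈ skewCells lam mu → i1 < i2 →
    T (i1, j) < T (i2, j))

/-- The number of entries equal to `k` among the cells read (in the reverse reading word:
right to left along rows, top row first) up to position `(i,j)`. -/
def prefixCount (lam mu : YoungDiagram) (T : ℕ × ℕ → ℕ) (i j k : ℕ) : ℕ :=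
  ((skewCells lam mu).filter fun p => (p.1 < i ∨ (p.1 = i ∧ j ≤ p.2)) ∧ T p = k).card

/-- The reverse reading word of the filling is a lattice word. -/
def IsLattice (lam mu : YoungDiagram) (T : ℕ × ℕ → ℕ) : Prop :=
  ∀ i j k, prefixCount lam mu T i j (k + 2) ≤ prefixCount lam mu T i j (k + 1)

/-- The number of entries of the filling equal to `k`. -/
def content (lam mu : YoungDiagram) (T : ℕ × ℕ → ℕ) (k : ℕ) : ℕ :=
  ((skewCells lam mu).filter fun p => T p = k).card

/-- A Littlewood–Richardson tableau of shape `lam/mu` and content `nu`. -/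
def IsLR (lam mu nu : YoungDiagram) (T : ℕ × ℕ → ℕ) : Prop :=
  IsSSYT lam mu T ∧ IsLattice lam mu T ∧ ∀ i, content lam mu T (i + 1) = nu.rowLen i

/-- The Littlewood–Richardson coefficient `c(lam; mu, nu)`. -/
noncomputable def lrCoeff (lam mu nu : YoungDiagram) : ℕ :=
  if mu ≤ lam then {T : ℕ × ℕ → ℕ | IsLR lam mu nu T}.ncard else 0

/-- Equality of the skew Schur functions `s_{lam/mu} = s_{alp/bet}`, expressed through
their expansions into Schur functions. -/
def SchurEq (lam mu alp bet : YoungDiagram) : Prop :=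
  ∀ nu : YoungDiagram, lrCoeff lam mu nu = lrCoeff alp bet nu

/-- The rectangular Young diagram `(k^l)` with `l` rows of length `k`. -/
def rect (k l : ℕ) : YoungDiagram :=
  ⟨Finset.range l ×ˢ Finset.range k, by
    intro a b hba ha
    simp only [Finset.coe_product, Set.mem_prod, Finset.mem_coe, Finset.mem_range] at ha ⊢
    exact ⟨lt_of_le_of_lt hba.1 ha.1, lt_of_le_of_lt hba.2 ha.2⟩⟩

/-- The complement of `nu` in the rectangle `(k^l)`, rotated by 180 degrees so that it is
again a partition: its parts are `(k - nu_l, …, k - nu_1)`. -/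
def complRect (k l : ℕ) (nu : YoungDiagram) : YoungDiagram :=
  ⟨(rect k l).cells.filter fun p => (l - 1 - p.1, k - 1 - p.2) ∉ nu, by
    intro a b hba ha
    simp only [Finset.coe_filter, Set.mem_setOf_eq, mem_cells] at ha ⊢
    refine ⟨(rect k l).isLowerSet hba ha.1, fun hmem => ha.2 ?_⟩
    exact nu.isLowerSet
      (Prod.mk_le_mk.mpr ⟨Nat.sub_le_sub_left hba.1 _, Nat.sub_le_sub_left hba.2 _⟩) hmem⟩

/-- The staircase partition `(n, n-1, …, 2, 1)`. -/
def staircase (n : ℕ) : YoungDiagram :=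
  ⟨(Finset.range n ×ˢ Finset.range n).filter fun p => p.1 + p.2 < n, by
    intro a b hba ha
    simp only [Finset.coe_filter, Set.mem_setOf_eq, Finset.mem_product, Finset.mem_range] at ha ⊢
    exact ⟨⟨lt_of_le_of_lt hba.1 ha.1.1, lt_of_le_of_lt hba.2 ha.1.2⟩,
      lt_of_le_of_lt (Nat.add_le_add hba.1 hba.2) ha.2⟩⟩

/-- A basic skew diagram: no empty rows and no empty columns. -/
def IsBasic (lam mu : YoungDiagram) : Prop :=
  (∀ i, i < lam.colLen 0 → mu.rowLen i < lam.rowLen i) ∧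
  (∀ j, j < lam.rowLen 0 → mu.colLen j < lam.colLen j)

/-- A (basic) skew diagram is connected iff consecutive rows share a column. -/
def IsConnectedSkew (lam mu : YoungDiagram) : Prop :=
  ∀ i, i + 1 < lam.colLen 0 → mu.rowLen i < lam.rowLen (i + 1)

/-- The number of distinct (positive) part sizes of a partition. -/
def dp (lam : YoungDiagram) : ℕ :=
  ((Finset.range (lam.colLen 0)).image fun i => lam.rowLen i).card

/-- A partition is a rectangle: all its parts are equal. -/
def IsRect (mu : YoungDiagram) : Prop :=
  ∀ i, i < mu.colLen 0 → mu.rowLen i = mu.rowLen 0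

/-- Cells of a skew diagram in the same connected component: the reflexive–transitive
closure of sharing a row or a column. -/
def SameComp (s : Finset (ℕ × ℕ)) : ℕ × ℕ → ℕ × ℕ → Prop :=
  Relation.ReflTransGen fun a b => a ∈ s ∧ b ∈ s ∧ (a.1 = b.1 ∨ a.2 = b.2)

/-- Two finite sets of boxes agree up to translation or 180°-rotation of each connected
component independently. -/
def UpToTransRot (s t : Finset (ℕ × ℕ)) : Prop :=
  ∃ f : ℕ × ℕ → ℕ × ℕ, Set.BijOn f ↑s ↑t ∧
    ∀ p ∈ s, ∀ q ∈ s, SameComp s p q →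
      (((f q).1 : ℤ) - (f p).1 = (q.1 : ℤ) - p.1 ∧ ((f q).2 : ℤ) - (f p).2 = (q.2 : ℤ) - p.2) ∨
      (((f q).1 : ℤ) - (f p).1 = (p.1 : ℤ) - q.1 ∧ ((f q).2 : ℤ) - (f p).2 = (p.2 : ℤ) - q.2)

/-! Filling each box of `λ/μ` with its depth in its column gives an LR tableau whose content `ν*`
is the conjugate of the multiset of column heights: `ν*ᵢ` is the number of columns of height
`> i`. In any semistandard filling the entry of a box is at least its depth, so the boxes with
entries `≤ k` are among those of depth `≤ k`; hence `ν*` dominates every `ν` with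
`c(λ; μ, ν) ≠ 0`. So `ν*` is determined by `s_{λ/μ}`, and with it the column heights. -/

def colHeight (lam mu : YoungDiagram) (j : ℕ) : ℕ := lam.colLen j - mu.colLen j

def colCountGE (lam mu : YoungDiagram) (k : ℕ) : ℕ :=
  ((Finset.range (lam.rowLen 0)).filter fun j => k ≤ colHeight lam mu j).card

lemma lt_rowLen_zero_of_colHeight_pos {lam mu : YoungDiagram} {j : ℕ}
    (hj : 0 < colHeight lam mu j) : j < lam.rowLen 0 :=
  mem_iff_lt_rowLen.mp (mem_iff_lt_colLen.mpr (by unfold colHeight at hj; omega))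

lemma colCountGE_antitone (lam mu : YoungDiagram) : Antitone (colCountGE lam mu) :=
  fun _ _ hab => Finset.card_le_card (Finset.monotone_filter_right _ fun _ _ => hab.trans)

lemma colCountGE_succ_le_rowLen (lam mu : YoungDiagram) (i : ℕ) :
    colCountGE lam mu (i + 1) ≤ lam.rowLen i := by
  unfold colCountGE
  refine (Finset.card_le_card fun j hj => ?_).trans (Finset.card_range (lam.rowLen i)).le
  have hi := (Finset.mem_filter.mp hj).2
  unfold colHeight at hi
  exact Finset.mem_range.mpr (mem_iff_lt_rowLen.mp (mem_iff_lt_colLen.mpr (by omega)))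

lemma ncard_colHeight_eq_succ (lam mu : YoungDiagram) (k : ℕ) :
    {j | colHeight lam mu j = k + 1}.ncard =
      colCountGE lam mu (k + 1) - colCountGE lam mu (k + 2) := by
  have hset : {j | colHeight lam mu j = k + 1} =
      ↑((Finset.range (lam.rowLen 0)).filter fun j => colHeight lam mu j = k + 1) := by
    ext j
    simp only [Set.mem_ofPred_eq, Finset.coe_filter, Finset.mem_range]
    exact ⟨fun hj => ⟨lt_rowLen_zero_of_colHeight_pos (k.succ_pos.trans_eq hj.symm), hj⟩,
      And.right⟩
  have hsplit : colCountGE lam mu (k + 1) =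
      ((Finset.range (lam.rowLen 0)).filter fun j => colHeight lam mu j = k + 1).card +
        colCountGE lam mu (k + 2) := by
    rw [colCountGE, colCountGE, ← Finset.card_union_of_disjoint
      (Finset.disjoint_filter.mpr fun _ _ h => by omega), ← Finset.filter_or]
    congr 2
    ext j
    omega
  rw [hset, Set.ncard_coe_finset, hsplit, Nat.add_sub_cancel]

def depthContent (lam mu : YoungDiagram) : YoungDiagram :=
  ⟨lam.cells.filter fun p => p.2 < colCountGE lam mu (p.1 + 1), by
    intro a b hab hb
    simp only [Finset.coe_filter, Set.mem_ofPred_eq, mem_cells] at hb ⊢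
    exact ⟨lam.isLowerSet hab hb.1, hab.2.trans_lt
      (hb.2.trans_le (colCountGE_antitone lam mu (Nat.add_le_add_right hab.1 1)))⟩⟩

lemma mem_depthContent {lam mu : YoungDiagram} {i j : ℕ} :
    (i, j) ∈ depthContent lam mu ↔ j < colCountGE lam mu (i + 1) := by
  change (i, j) ∈ lam.cells.filter _ ↔ _
  rw [Finset.mem_filter, mem_cells, and_iff_right_iff_imp]
  exact fun hj => mem_iff_lt_rowLen.mpr (hj.trans_le (colCountGE_succ_le_rowLen lam mu i))

lemma rowLen_depthContent (lam mu : YoungDiagram) (i : ℕ) :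
    (depthContent lam mu).rowLen i = colCountGE lam mu (i + 1) :=
  eq_of_forall_lt_iff fun j => by rw [← mem_iff_lt_rowLen, mem_depthContent]

lemma mem_skewCells_iff {lam mu : YoungDiagram} {i j : ℕ} :
    (i, j) ∈ skewCells lam mu ↔ mu.colLen j ≤ i ∧ i < lam.colLen j := by
  simp only [skewCells, Finset.mem_sdiff, mem_cells, YoungDiagram.mem_iff_lt_colLen, not_lt]
  tauto

def depthFilling (lam mu : YoungDiagram) (p : ℕ × ℕ) : ℕ :=
  if p ∈ skewCells lam mu then p.1 + 1 - mu.colLen p.2 else 0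

lemma depthFilling_of_mem {lam mu : YoungDiagram} {i j : ℕ} (h : (i, j) ∈ skewCells lam mu) :
    depthFilling lam mu (i, j) = i + 1 - mu.colLen j := by
  simp [depthFilling, h]

lemma isSSYT_depthFilling (lam mu : YoungDiagram) : IsSSYT lam mu (depthFilling lam mu) := by
  refine ⟨fun ⟨i, j⟩ => ?_, fun i j₁ j₂ h₁ h₂ hj => ?_, fun i₁ i₂ j h₁ h₂ hi => ?_⟩
  · by_cases h : (i, j) ∈ skewCells lam mu
    · have := (mem_skewCells_iff.mp h).1
      simp only [h, depthFilling_of_mem h, ne_eq, true_iff]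
      omega
    · simp [depthFilling, h]
  · rw [depthFilling_of_mem h₁, depthFilling_of_mem h₂]
    exact Nat.sub_le_sub_left (mu.colLen_anti j₁ j₂ hj) _
  · rw [depthFilling_of_mem h₁, depthFilling_of_mem h₂]
    have := (mem_skewCells_iff.mp h₁).1
    omega

/-- Every box with entry `k + 2` sits directly below a box with entry `k + 1`, which comes
earlier in the reading word. -/
lemma isLattice_depthFilling (lam mu : YoungDiagram) : IsLattice lam mu (depthFilling lam mu) := by
  intro i₀ j₀ k
  refine Finset.card_le_card_of_injOn (fun p => (p.1 - 1, p.2)) ?_ ?_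
  · rintro ⟨i, j⟩ hp
    simp only [Finset.coe_filter, Set.mem_ofPred_eq] at hp ⊢
    obtain ⟨hmem, hpre, hval⟩ := hp
    rw [depthFilling_of_mem hmem] at hval
    have := mem_skewCells_iff.mp hmem
    have hmem' : (i - 1, j) ∈ skewCells lam mu := mem_skewCells_iff.mpr ⟨by omega, by omega⟩
    refine ⟨hmem', Or.inl (by omega), ?_⟩
    rw [depthFilling_of_mem hmem']
    omega
  · rintro ⟨i, j⟩ hp ⟨i', j'⟩ hq heq
    simp only [Finset.coe_filter, Set.mem_ofPred_eq] at hp hq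
    obtain ⟨hm₁, -, hv₁⟩ := hp
    obtain ⟨hm₂, -, hv₂⟩ := hq
    rw [depthFilling_of_mem hm₁] at hv₁
    rw [depthFilling_of_mem hm₂] at hv₂
    simp only [Prod.mk.injEq] at heq ⊢
    obtain ⟨hi, rfl⟩ := heq
    omega

lemma content_depthFilling (lam mu : YoungDiagram) (k : ℕ) :
    content lam mu (depthFilling lam mu) (k + 1) = colCountGE lam mu (k + 1) := by
  refine Finset.card_nbij' Prod.snd (fun j => (mu.colLen j + k, j)) ?_ ?_ ?_ (fun _ _ => rfl)
  · rintro ⟨i, j⟩ hp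
    simp only [Finset.coe_filter, Set.mem_ofPred_eq, Finset.mem_range] at hp ⊢
    rw [depthFilling_of_mem hp.1] at hp
    have := mem_skewCells_iff.mp hp.1
    have hk : k + 1 ≤ colHeight lam mu j := by unfold colHeight; omega
    exact ⟨lt_rowLen_zero_of_colHeight_pos (k.succ_pos.trans_le hk), hk⟩
  · intro j hj
    have hk := (Finset.mem_filter.mp hj).2
    unfold colHeight at hk
    have hmem : (mu.colLen j + k, j) ∈ skewCells lam mu :=
      mem_skewCells_iff.mpr ⟨by omega, by omega⟩
    refine Finset.mem_filter.mpr ⟨hmem, ?_⟩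
    rw [depthFilling_of_mem hmem]
    omega
  · rintro ⟨i, j⟩ hp
    simp only [Finset.coe_filter, Set.mem_ofPred_eq] at hp
    rw [depthFilling_of_mem hp.1] at hp
    have := (mem_skewCells_iff.mp hp.1).1
    simp only [Prod.mk.injEq, and_true]
    omega

lemma isLR_depthFilling (lam mu : YoungDiagram) :
    IsLR lam mu (depthContent lam mu) (depthFilling lam mu) :=
  ⟨isSSYT_depthFilling lam mu, isLattice_depthFilling lam mu, fun i => by
    rw [content_depthFilling, rowLen_depthContent]⟩

lemma IsSSYT.depthFilling_le {lam mu : YoungDiagram} {T : ℕ × ℕ → ℕ} (hT : IsSSYT lam mu T)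
    (p : ℕ × ℕ) : depthFilling lam mu p ≤ T p := by
  obtain ⟨i, j⟩ := p
  by_cases hp : (i, j) ∈ skewCells lam mu
  · rw [depthFilling_of_mem hp]
    induction i with
    | zero => have := (hT.1 _).mp hp; omega
    | succ n ih =>
      rcases Nat.lt_or_ge n (mu.colLen j) with hn | hn
      · have := (hT.1 _).mp hp; omega
      · have hp' : (n, j) ∈ skewCells lam mu :=
          mem_skewCells_iff.mpr ⟨hn, (Nat.lt_succ_self n).trans (mem_skewCells_iff.mp hp).2⟩
        have := hT.2.2 n (n + 1) j hp' hp n.lt_succ_self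
        have := ih hp'
        omega
  · simp [depthFilling, hp]

lemma card_filter_le_eq_sum_content {lam mu : YoungDiagram} {T : ℕ × ℕ → ℕ}
    (hT : ∀ p ∈ skewCells lam mu, T p ≠ 0) (k : ℕ) :
    ((skewCells lam mu).filter fun p => T p ≤ k).card =
      ∑ i ∈ Finset.range k, content lam mu T (i + 1) := by
  induction k with
  | zero =>
    rw [Finset.filter_false_of_mem fun p hp hle => hT p hp (Nat.le_zero.mp hle)]
    rfl
  | succ k ih =>
    rw [Finset.sum_range_succ, ← ih, content, ← Finset.card_union_of_disjoint
      (Finset.disjoint_filter.mpr fun _ _ h => by omega), ← Finset.filter_or]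
    congr 2
    ext p
    omega

lemma IsSSYT.sum_content_le {lam mu : YoungDiagram} {T : ℕ × ℕ → ℕ} (hT : IsSSYT lam mu T)
    (k : ℕ) : ∑ i ∈ Finset.range k, content lam mu T (i + 1) ≤
      ∑ i ∈ Finset.range k, colCountGE lam mu (i + 1) := by
  simp only [← content_depthFilling]
  rw [← card_filter_le_eq_sum_content fun p hp => (hT.1 p).mp hp,
    ← card_filter_le_eq_sum_content fun p hp => ((isSSYT_depthFilling lam mu).1 p).mp hp]
  exact Finset.card_le_card
    (Finset.monotone_filter_right _ fun p _ hle => (hT.depthFilling_le p).trans hle)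

lemma IsLR.sum_rowLen_le {lam mu nu : YoungDiagram} {T : ℕ × ℕ → ℕ} (hT : IsLR lam mu nu T)
    (k : ℕ) : ∑ i ∈ Finset.range k, nu.rowLen i ≤
      ∑ i ∈ Finset.range k, (depthContent lam mu).rowLen i := by
  simpa only [← hT.2.2, rowLen_depthContent] using hT.1.sum_content_le k

lemma IsLR.le_colLen_zero {lam mu nu : YoungDiagram} {T : ℕ × ℕ → ℕ}
    (hT : IsLR lam mu nu T) (p : ℕ × ℕ) : T p ≤ nu.colLen 0 := by
  by_cases hTp : T p = 0
  · omega
  have hcontent : 0 < content lam mu T (T p - 1 + 1) :=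
    Finset.card_pos.mpr ⟨p, Finset.mem_filter.mpr ⟨(hT.1.1 p).mpr hTp, by omega⟩⟩
  rw [hT.2.2, ← mem_iff_lt_rowLen, mem_iff_lt_colLen] at hcontent
  omega

lemma finite_setOf_isLR (lam mu nu : YoungDiagram) : {T | IsLR lam mu nu T}.Finite := by
  refine Set.Finite.of_finite_image (f := fun T (p : skewCells lam mu) => T p)
    ((Set.Finite.pi' fun _ => Set.finite_Iic (nu.colLen 0)).subset ?_) ?_
  · rintro _ ⟨T, hT, rfl⟩ p
    exact hT.le_colLen_zero p
  · intro T hT T' hT' heq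
    funext p
    by_cases hp : p ∈ skewCells lam mu
    · exact congrFun heq ⟨p, hp⟩
    · rw [not_not.mp (mt (hT.1.1 p).mpr hp), not_not.mp (mt (hT'.1.1 p).mpr hp)]

lemma lrCoeff_ne_zero_iff {lam mu nu : YoungDiagram} (hmu : mu ≤ lam) :
    lrCoeff lam mu nu ≠ 0 ↔ ∃ T, IsLR lam mu nu T := by
  rw [lrCoeff, if_pos hmu, ← Nat.pos_iff_ne_zero, Set.ncard_pos (finite_setOf_isLR lam mu nu)]
  rfl

lemma sum_rowLen_depthContent_le_of_schurEq {lam mu alp bet : YoungDiagram} (hmu : mu ≤ lam)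
    (hbet : bet ≤ alp) (h : SchurEq lam mu alp bet) (n : ℕ) :
    ∑ i ∈ Finset.range n, (depthContent lam mu).rowLen i ≤
      ∑ i ∈ Finset.range n, (depthContent alp bet).rowLen i := by
  obtain ⟨T, hT⟩ := (lrCoeff_ne_zero_iff hbet).mp
    (h _ ▸ (lrCoeff_ne_zero_iff hmu).mpr ⟨_, isLR_depthFilling lam mu⟩)
  exact hT.sum_rowLen_le n

lemma rowLen_depthContent_eq_of_schurEq {lam mu alp bet : YoungDiagram} (hmu : mu ≤ lam)
    (hbet : bet ≤ alp) (h : SchurEq lam mu alp bet) (i : ℕ) :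
    (depthContent lam mu).rowLen i = (depthContent alp bet).rowLen i := by
  have hsum (n : ℕ) := le_antisymm (sum_rowLen_depthContent_le_of_schurEq hmu hbet h n)
    (sum_rowLen_depthContent_le_of_schurEq hbet hmu (fun nu => (h nu).symm) n)
  have hsucc := hsum (i + 1)
  rw [Finset.sum_range_succ, Finset.sum_range_succ, hsum i] at hsucc
  exact Nat.add_left_cancel hsucc

/-- skew diagrams with equal skew Schur functions have the same multiset of
column heights. -/
theorem colHeights_eq_of_schurEq (lam mu alp bet : YoungDiagram)
    (hmu : mu ≤ lam) (hbet : bet ≤ alp) (h : SchurEq lam mu alp bet) :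
    ∀ h' : ℕ, 0 < h' →
      {j : ℕ | lam.colLen j - mu.colLen j = h'}.ncard =
        {j : ℕ | alp.colLen j - bet.colLen j = h'}.ncard := by
  intro h' hpos
  obtain ⟨k, rfl⟩ : ∃ k, h' = k + 1 := ⟨h' - 1, by omega⟩
  have hcount (i : ℕ) : colCountGE lam mu (i + 1) = colCountGE alp bet (i + 1) := by
    simpa only [rowLen_depthContent] using rowLen_depthContent_eq_of_schurEq hmu hbet h i
  calc _ = colCountGE lam mu (k + 1) - colCountGE lam mu (k + 2) :=
        ncard_colHeight_eq_succ lam mu k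
    _ = colCountGE alp bet (k + 1) - colCountGE alp bet (k + 2) :=
      congrArg₂ (· - ·) (hcount k) (hcount (k + 1))
    _ = _ := (ncard_colHeight_eq_succ alp bet k).symm

end LRSkew
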